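/- arXiv:1205.5290 — 4 statements merged into one kernel-verified Lean document; each statement's English description precedes it below -/
import Mathlib

section
/- Let W be a finite group and H a proper subgroup of W. Then there exists a conjugacy class U of W such that H has empty intersection with U. (Jordan's theorem on conjugacy classes.) -/
open Matrix

abbrev GLn (n : ℕ) (F : Type*) [Field F] := GL (Fin n) F

noncomputable def matEval {n : ℕ} {F : Type*} [Field F] (M : Matrix (Fin n) (Fin n) F)
    (p : MvPolynomial (Fin n × Fin n) F) : F :=
  MvPolynomial.eval (fun ij => M ij.1 ij.2) p

def IsZClosed {n : ℕ} {F : Type*} [Field F] (s : Set (GLn n F)) : Prop :=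
  ∃ I : Set (MvPolynomial (Fin n × Fin n) F),
    s = {g : GLn n F | ∀ p ∈ I, matEval (g : Matrix (Fin n) (Fin n) F) p = 0}

def ZConnected {n : ℕ} {F : Type*} [Field F] (s : Set (GLn n F)) : Prop :=
  s.Nonempty ∧ ∀ t u : Set (GLn n F), IsZClosed t → IsZClosed u →
    s ⊆ t ∪ u → s ⊆ t ∨ s ⊆ u

def IsIdentityComponent {n : ℕ} {F : Type*} [Field F]
    (G Go : Subgroup (GLn n F)) : Prop :=
  Go ≤ G ∧ IsZClosed (Go : Set (GLn n F)) ∧ ZConnected (Go : Set (GLn n F)) ∧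
    ∀ s : Set (GLn n F), s ⊆ (G : Set (GLn n F)) → IsZClosed s → ZConnected s →
      (1 : GLn n F) ∈ s → s ⊆ (Go : Set (GLn n F))

def IsUnipotentMat {n : ℕ} {F : Type*} [Field F] (M : Matrix (Fin n) (Fin n) F) : Prop :=
  IsNilpotent (M - 1)

def IsSemisimpleElt {n : ℕ} {F : Type*} [Field F] (g : GLn n F) : Prop :=
  Module.End.IsSemisimple
    (Matrix.toLin' ((g : GLn n F) : Matrix (Fin n) (Fin n) F) : Module.End F (Fin n → F))

def IsDiagonalizableSubgroup {n : ℕ} {F : Type*} [Field F] (D : Subgroup (GLn n F)) : Prop :=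
  ∃ P : GLn n F, ∀ g ∈ D, ∀ i j : Fin n, i ≠ j →
    ((P * g * P⁻¹ : GLn n F) : Matrix (Fin n) (Fin n) F) i j = 0

def IsAlgTorus {n : ℕ} {F : Type*} [Field F] (T : Subgroup (GLn n F)) : Prop :=
  IsDiagonalizableSubgroup T ∧ IsZClosed (T : Set (GLn n F)) ∧ ZConnected (T : Set (GLn n F))

def IsMaximalTorusIn {n : ℕ} {F : Type*} [Field F] (G T : Subgroup (GLn n F)) : Prop :=
  T ≤ G ∧ IsAlgTorus T ∧
    ∀ T' : Subgroup (GLn n F), T' ≤ G → IsAlgTorus T' → T ≤ T' → T' = T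

def IsReductiveGrp {n : ℕ} {F : Type*} [Field F] (Go : Subgroup (GLn n F)) : Prop :=
  ∀ U : Subgroup (GLn n F), U ≤ Go → IsZClosed (U : Set (GLn n F)) →
    ZConnected (U : Set (GLn n F)) →
    (∀ g ∈ Go, ∀ u ∈ U, g * u * g⁻¹ ∈ U) →
    (∀ u ∈ U, IsUnipotentMat ((u : GLn n F) : Matrix (Fin n) (Fin n) F)) → U = ⊥

def IsSemisimpleGrp {n : ℕ} {F : Type*} [Field F] (Go : Subgroup (GLn n F)) : Prop :=
  IsReductiveGrp Go ∧ Set.Finite {g : GLn n F | g ∈ Go ∧ ∀ h ∈ Go, g * h = h * g}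

def IsCartanSubgroup {n : ℕ} {F : Type*} [Field F] (G C Co : Subgroup (GLn n F)) : Prop :=
  C ≤ G ∧ IsDiagonalizableSubgroup C ∧ IsZClosed (C : Set (GLn n F)) ∧
    IsIdentityComponent C Co ∧
    (∃ g ∈ C, ∀ x ∈ C, ∃ k : ℤ, g ^ k * x⁻¹ ∈ Co) ∧
    C.relIndex (G ⊓ Subgroup.normalizer (C : Set (GLn n F))) ≠ 0

/-! By Burnside's lemma the number of fixed points of `W` acting on `W ⧸ H`, averaged over `W`,
is the number of orbits, namely one. The identity fixes all `[W : H] ≥ 2` points, so some `w`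
fixes no coset `xH`; that is, no conjugate `x⁻¹ w x` lies in `H`. -/

namespace MulAction

variable {G X : Type*} [Group G] [MulAction G X]

theorem exists_fixedBy_eq_empty [Finite G] [Finite X] [Nontrivial X] [IsPretransitive G X] :
    ∃ g : G, fixedBy X g = ∅ := by
  classical
  have := Fintype.ofFinite G
  have := Fintype.ofFinite X
  by_contra! h
  have : Unique (orbitRel.Quotient G X) :=
    ((pretransitive_iff_unique_quotient_of_nonempty G X).mp inferInstance).some
  have hlt : ∑ _g : G, 1 < ∑ g : G, Fintype.card (fixedBy X g) := by
    refine Finset.sum_lt_sum (fun g _ => Fintype.card_pos_iff.mpr (h g).to_subtype)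
      ⟨1, Finset.mem_univ _, ?_⟩
    simpa [fixedBy_one_eq_univ] using Fintype.one_lt_card
  rw [sum_card_fixedBy_eq_card_orbits_mul_card_group] at hlt
  simp at hlt

end MulAction

theorem jordan_conjugacy_class_avoidance (W : Type*) [Group W] [Finite W]
    (H : Subgroup W) (hH : H ≠ ⊤) :
    ∃ w : W, ∀ x : W, x * w * x⁻¹ ∉ H := by
  have : Nontrivial (W ⧸ H) := QuotientGroup.nontrivial_iff.mpr hH
  obtain ⟨w, hw⟩ := MulAction.exists_fixedBy_eq_empty (G := W) (X := W ⧸ H)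
  refine ⟨w⁻¹, fun x hx => (Set.eq_empty_iff_forall_notMem.mp hw) (x⁻¹ : W) ?_⟩
  rw [MulAction.mem_fixedBy, MulAction.Quotient.smul_mk, QuotientGroup.eq]
  simpa [mul_assoc] using hx
end

section
/- Let H be a linear algebraic group over an algebraically closed field with H° reductive, C ≤ H a Cartan subgroup, and h ∈ C a semisimple element such that hC° generates C/C°. Then C° is a maximal torus of the identity component of the centralizer Z_{H°}(h). -/
open Matrix

/-!
`C°` is a closed connected diagonalizable subgroup of `H°` commuting with `h`, so it lies in `Z`.
A torus `T ⊇ C°` of `Z` is commutative and centralizes `h`, hence centralizes `C = ⟨h⟩ C°`; so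
`T ≤ N_H(C)`, in which `C` has finite index. A connected group has no proper closed subgroup of
finite index, so `T ≤ C`, and then `T ≤ C°` by connectedness.
-/

lemma Commute.of_zpow_mul_inv_mem {G : Type*} [Group G] {K : Subgroup G} {t h x : G}
    (hth : Commute t h) (htK : ∀ c ∈ K, Commute t c) (hx : ∃ k : ℤ, h ^ k * x⁻¹ ∈ K) :
    Commute t x := by
  obtain ⟨k, hk⟩ := hx
  have hcomm : Commute t ((h ^ k * x⁻¹)⁻¹ * h ^ k) :=
    (htK _ hk).inv_right.mul_right (hth.zpow_right k)
  simpa using hcomm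

section ZariskiTopology

open MvPolynomial

variable {n : ℕ} {F : Type*} [Field F]

lemma isZClosed_empty : IsZClosed (∅ : Set (GLn n F)) :=
  ⟨{1}, by ext; simp [matEval]⟩

lemma IsZClosed.union {s t : Set (GLn n F)} (hs : IsZClosed s) (ht : IsZClosed t) :
    IsZClosed (s ∪ t) := by
  obtain ⟨I, rfl⟩ := hs
  obtain ⟨J, rfl⟩ := ht
  refine ⟨Set.image2 (· * ·) I J, Set.ext fun g => ?_⟩
  simp only [Set.mem_union, Set.mem_ofPred_eq, Set.forall_mem_image2, matEval, map_mul,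
    mul_eq_zero]
  constructor
  · rintro (hg | hg) p hp q hq
    exacts [Or.inl (hg p hp), Or.inr (hg q hq)]
  · intro hg
    by_contra! hcon
    obtain ⟨⟨p, hp, hp0⟩, ⟨q, hq, hq0⟩⟩ := hcon
    exact (hg p hp q hq).elim hp0 hq0

lemma isZClosed_biUnion {α : Type*} (s : Finset α) {f : α → Set (GLn n F)}
    (hf : ∀ a ∈ s, IsZClosed (f a)) : IsZClosed (⋃ a ∈ s, f a) := by
  classical
  induction s using Finset.induction_on with
  | empty => simpa using isZClosed_empty
  | insert a s _ ih =>
    rw [Finset.set_biUnion_insert]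
    exact (hf a (s.mem_insert_self a)).union (ih fun b hb => hf b (Finset.mem_insert_of_mem hb))

/-- Left translation is a morphism: substituting the entries of `g * X` for those of `X`. -/
lemma IsZClosed.preimage_mul_left {s : Set (GLn n F)} (hs : IsZClosed s) (g : GLn n F) :
    IsZClosed ((g * ·) ⁻¹' s) := by
  obtain ⟨I, rfl⟩ := hs
  set A : Matrix (Fin n) (Fin n) F := (g : Matrix (Fin n) (Fin n) F)
  have hsubst : ∀ (x : GLn n F) (p : MvPolynomial (Fin n × Fin n) F),
      matEval (x : Matrix (Fin n) (Fin n) F)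
          (bind₁ (fun ij : Fin n × Fin n => ∑ k, C (A ij.1 k) * X (k, ij.2)) p) =
        matEval ((g * x : GLn n F) : Matrix (Fin n) (Fin n) F) p := by
    intro x p
    change eval₂Hom (RingHom.id F) _ _ = eval₂Hom (RingHom.id F) _ _
    rw [eval₂Hom_bind₁]
    congr 2
    funext ij
    simp [Matrix.mul_apply, A]
  refine ⟨bind₁ (fun ij : Fin n × Fin n => ∑ k, C (A ij.1 k) * X (k, ij.2)) '' I,
    Set.ext fun x => ?_⟩
  simp [hsubst]

lemma ZConnected.exists_subset_of_subset_biUnion {α : Type*} {s : Set (GLn n F)}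
    (hs : ZConnected s) (ι : Finset α) {f : α → Set (GLn n F)} (hf : ∀ a ∈ ι, IsZClosed (f a))
    (hsub : s ⊆ ⋃ a ∈ ι, f a) : ∃ a ∈ ι, s ⊆ f a := by
  classical
  induction ι using Finset.induction_on with
  | empty =>
    obtain ⟨x, hx⟩ := hs.1
    simpa using hsub hx
  | insert a ι _ ih =>
    rw [Finset.set_biUnion_insert] at hsub
    have hf' : ∀ b ∈ ι, IsZClosed (f b) := fun b hb => hf b (Finset.mem_insert_of_mem hb)
    rcases hs.2 _ _ (hf a (ι.mem_insert_self a)) (isZClosed_biUnion ι hf') hsub with h | h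
    · exact ⟨a, ι.mem_insert_self a, h⟩
    · obtain ⟨b, hb, hsb⟩ := ih hf' h
      exact ⟨b, Finset.mem_insert_of_mem hb, hsb⟩

/-- A connected group has no proper closed subgroup of finite index: the finitely many closed
cosets would disconnect it. -/
lemma ZConnected.le_of_relIndex_ne_zero {T K : Subgroup (GLn n F)}
    (hT : ZConnected (T : Set (GLn n F))) (hK : IsZClosed (K : Set (GLn n F)))
    (hindex : K.relIndex T ≠ 0) : T ≤ K := by
  have : (K.subgroupOf T).FiniteIndex := ⟨hindex⟩
  let _ := Fintype.ofFinite (T ⧸ K.subgroupOf T)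
  let rep : T ⧸ K.subgroupOf T → GLn n F := fun q => (q.out : GLn n F)
  have hcover : (T : Set (GLn n F)) ⊆ ⋃ q ∈ Finset.univ, ((rep q)⁻¹ * ·) ⁻¹' K := by
    intro t ht
    let q : T ⧸ K.subgroupOf T := QuotientGroup.mk ⟨t, ht⟩
    refine Set.mem_biUnion (Finset.mem_univ q) ?_
    have := QuotientGroup.eq.mp (QuotientGroup.out_eq' q)
    simpa [rep, Subgroup.mem_subgroupOf] using this
  obtain ⟨q, -, hq⟩ := hT.exists_subset_of_subset_biUnion Finset.univ
    (fun q _ => hK.preimage_mul_left (rep q)⁻¹) hcover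
  have hrep : rep q ∈ K := by simpa using hq T.one_mem
  intro t ht
  simpa [hrep] using K.mul_mem hrep (hq ht)

end ZariskiTopology

section Subgroups

variable {n : ℕ} {F : Type*} [Field F]

lemma IsIdentityComponent.le_of_isZClosed_of_zconnected {G Go T : Subgroup (GLn n F)}
    (hGo : IsIdentityComponent G Go) (hTG : T ≤ G) (hT : IsZClosed (T : Set (GLn n F)))
    (hTc : ZConnected (T : Set (GLn n F))) : T ≤ Go :=
  hGo.2.2.2 T hTG hT hTc T.one_mem

lemma IsDiagonalizableSubgroup.mono {D D' : Subgroup (GLn n F)} (hD : IsDiagonalizableSubgroup D)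
    (hle : D' ≤ D) : IsDiagonalizableSubgroup D' :=
  let ⟨P, hP⟩ := hD
  ⟨P, fun g hg => hP g (hle hg)⟩

lemma IsDiagonalizableSubgroup.commute {D : Subgroup (GLn n F)} (hD : IsDiagonalizableSubgroup D)
    {a b : GLn n F} (ha : a ∈ D) (hb : b ∈ D) : Commute a b := by
  classical
  obtain ⟨P, hP⟩ := hD
  have hdiag : ∀ g ∈ D, ((P * g * P⁻¹ : GLn n F) : Matrix (Fin n) (Fin n) F) =
      Matrix.diagonal (Matrix.diag ((P * g * P⁻¹ : GLn n F) : Matrix (Fin n) (Fin n) F)) :=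
    fun g hg => (Matrix.isDiag_iff_diagonal_diag _).mp (hP g hg) |>.symm
  refine (Commute.conj_iff P).mp (Units.ext ?_)
  rw [Units.val_mul (P * a * P⁻¹), Units.val_mul (P * b * P⁻¹), hdiag a ha, hdiag b hb,
    Matrix.diagonal_mul_diagonal, Matrix.diagonal_mul_diagonal]
  exact congrArg Matrix.diagonal (funext fun i => mul_comm _ _)

end Subgroups

theorem cartan_component_maximal_torus_in_centralizer_general
    {n : ℕ} {F : Type*} [Field F]
    (H Ho C Co Z : Subgroup (GLn n F))
    (hHo : IsIdentityComponent H Ho)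
    (hC : IsCartanSubgroup H C Co)
    (h : GLn n F) (hh : h ∈ C)
    (hgen : ∀ x ∈ C, ∃ k : ℤ, h ^ k * x⁻¹ ∈ Co)
    (hZ : IsIdentityComponent (Subgroup.centralizer {h} ⊓ Ho) Z) :
    IsMaximalTorusIn Z Co := by
  obtain ⟨hCH, hCdiag, hCcl, hCo, -, hindex⟩ := hC
  have ⟨hCoC, hCocl, hCoconn, _⟩ := hCo
  have hCoHo : Co ≤ Ho :=
    hHo.le_of_isZClosed_of_zconnected (hCoC.trans hCH) hCocl hCoconn
  have hCoCent : Co ≤ Subgroup.centralizer {h} := fun c hc =>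
    Subgroup.mem_centralizer_singleton_iff.mpr (hCdiag.commute (hCoC hc) hh)
  have hCoZ : Co ≤ Z := hZ.le_of_isZClosed_of_zconnected (le_inf hCoCent hCoHo) hCocl hCoconn
  refine ⟨hCoZ, ⟨hCdiag.mono hCoC, hCocl, hCoconn⟩, fun T hTZ ⟨hTdiag, hTcl, hTconn⟩ hCoT => ?_⟩
  have hTZh : T ≤ Subgroup.centralizer {h} ⊓ Ho := hTZ.trans hZ.1
  have hTcent : T ≤ Subgroup.centralizer (C : Set (GLn n F)) := fun t ht =>
    Subgroup.mem_centralizer_iff.mpr fun x hx =>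
      (Commute.of_zpow_mul_inv_mem
        (Subgroup.mem_centralizer_singleton_iff.mp (hTZh ht).1)
        (fun c hc => hTdiag.commute ht (hCoT hc)) (hgen x hx)).eq.symm
  have hTN : T ≤ H ⊓ Subgroup.normalizer (C : Set (GLn n F)) :=
    le_inf (fun t ht => hHo.1 (hTZh ht).2) (hTcent.trans (Subgroup.centralizer_le_normalizer _))
  have hTC : T ≤ C :=
    hTconn.le_of_relIndex_ne_zero hCcl (mt (Subgroup.relIndex_eq_zero_of_le_right hTN) hindex)
  exact le_antisymm (hCo.le_of_isZClosed_of_zconnected hTC hTcl hTconn) hCoT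

theorem cartan_component_maximal_torus_in_centralizer
    {n : ℕ} {F : Type*} [Field F] [IsAlgClosed F]
    (H Ho C Co Z : Subgroup (GLn n F))
    (hH : IsZClosed (H : Set (GLn n F)))
    (hHo : IsIdentityComponent H Ho)
    (hred : IsReductiveGrp Ho)
    (hC : IsCartanSubgroup H C Co)
    (h : GLn n F) (hh : h ∈ C) (hsemi : IsSemisimpleElt h)
    (hgen : ∀ x ∈ C, ∃ k : ℤ, h ^ k * x⁻¹ ∈ Co)
    (hZ : IsIdentityComponent (Subgroup.centralizer {h} ⊓ Ho) Z) :
    IsMaximalTorusIn Z Co :=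
  cartan_component_maximal_torus_in_centralizer_general H Ho C Co Z hHo hC h hh hgen hZ
end

section
/- Let G be a linear algebraic group over an algebraically closed field with G° reductive, and C a Cartan subgroup with maximal torus T_C = Z_{G°}(C°). Then C° is not contained in the kernel of any root of T_C; consequently the set of elements of C° that are regular semisimple in G° contains a nonempty open dense subset of C°. -/
/-!
After conjugation by a fixed matrix `P`, the Cartan subgroup consists of diagonal matrices.
A matrix commuting with a diagonal `t` has zero `(i, j)` entry whenever `t i i ≠ t j j`, so the
centralizer of `t ∈ C°` is that of all of `C°` as soon as `t` separates every pair of diagonal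
entries that are not equal throughout `C°`. Each such pair cuts out a hypersurface not
containing `C°`; as `C°` is irreducible, it is not contained in their union `Z`, which yields
both the nonemptiness and the density of `C° \ Z`.

A unipotent element centralizing `C°` lies in the torus `T_C`, so it is diagonalizable as well
as unipotent, hence trivial.
-/

open Matrix

namespace Matrix

variable {ι R : Type*} [Fintype ι] [DecidableEq ι]

theorem IsDiag.eq_zero_of_isNilpotent [CommSemiring R] [IsReduced R] {A : Matrix ι ι R}
    (hA : A.IsDiag) (hnil : IsNilpotent A) : A = 0 := by
  rw [← hA.diagonal_diag, ← diagonalRingHom_apply] at hnil ⊢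
  rw [((IsNilpotent.map_iff diagonal_injective).mp hnil).eq_zero, map_zero]

/-- Commuting with `diagonal d` forces `X i j = 0` whenever `d i ≠ d j`. -/
theorem commute_diagonal_of_commute_diagonal [CommRing R] [NoZeroDivisors R]
    {X : Matrix ι ι R} {d e : ι → R} (h : Commute X (diagonal d))
    (hde : ∀ i j, d i = d j → e i = e j) : Commute X (diagonal e) := by
  ext i j
  have hij : X i j * d j = d i * X i j := by simpa using congr_fun₂ h.eq i j
  simp only [mul_diagonal, diagonal_mul]
  rcases eq_or_ne (X i j) 0 with h0 | h0
  · simp [h0]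
  · rw [hde i j (mul_left_cancel₀ h0 (by rw [hij, mul_comm]))]
    ring

end Matrix

section GLn

variable {n : ℕ} {F : Type*} [Field F]

theorem matEval_sub (M : Matrix (Fin n) (Fin n) F) (p q : MvPolynomial (Fin n × Fin n) F) :
    matEval M (p - q) = matEval M p - matEval M q :=
  map_sub _ p q

def zeroLocus (p : MvPolynomial (Fin n × Fin n) F) : Set (GLn n F) :=
  {g | matEval (g : Matrix (Fin n) (Fin n) F) p = 0}

theorem isZClosed_zeroLocus (p : MvPolynomial (Fin n × Fin n) F) : IsZClosed (zeroLocus p) :=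
  ⟨{p}, by ext g; simp [zeroLocus]⟩

theorem zeroLocus_mul (p q : MvPolynomial (Fin n × Fin n) F) :
    zeroLocus (p * q) = zeroLocus p ∪ zeroLocus q := by
  ext g
  simp [zeroLocus, matEval]

theorem zeroLocus_prod {ι : Type*} (S : Finset ι) (p : ι → MvPolynomial (Fin n × Fin n) F) :
    zeroLocus (∏ i ∈ S, p i) = ⋃ i ∈ S, zeroLocus (p i) := by
  ext g
  simp [zeroLocus, matEval, Finset.prod_eq_zero_iff]

theorem ZConnected.subset_of_subset_union {s t u : Set (GLn n F)} (hs : ZConnected s)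
    (ht : IsZClosed t) (hu : IsZClosed u) (hsub : s ⊆ t ∪ u) (hsu : ¬ s ⊆ u) : s ⊆ t :=
  (hs.2 t u ht hu hsub).resolve_right hsu

theorem ZConnected.not_subset_zeroLocus_prod {s : Set (GLn n F)} (hs : ZConnected s)
    {ι : Type*} (S : Finset ι) (p : ι → MvPolynomial (Fin n × Fin n) F)
    (hp : ∀ i ∈ S, ¬ s ⊆ zeroLocus (p i)) : ¬ s ⊆ zeroLocus (∏ i ∈ S, p i) := by
  classical
  induction S using Finset.induction_on with
  | empty =>
    obtain ⟨g, hg⟩ := hs.1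
    intro h
    simpa [zeroLocus, matEval] using h hg
  | insert a S ha ih =>
    rw [Finset.prod_insert ha, mul_comm, zeroLocus_mul]
    exact fun hsub => ih (fun i hi => hp i (Finset.mem_insert_of_mem hi))
      (hs.subset_of_subset_union (isZClosed_zeroLocus _) (isZClosed_zeroLocus _) hsub
        (hp a (Finset.mem_insert_self a S)))

theorem IsDiagonalizableSubgroup.eq_one_of_isUnipotentMat {D : Subgroup (GLn n F)}
    (hD : IsDiagonalizableSubgroup D) {u : GLn n F} (hu : u ∈ D)
    (hunip : IsUnipotentMat (u : Matrix (Fin n) (Fin n) F)) : u = 1 := by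
  obtain ⟨P, hP⟩ := hD
  have hconj : ((P * u * P⁻¹ : GLn n F) : Matrix (Fin n) (Fin n) F) - 1 =
      P * ((u : Matrix (Fin n) (Fin n) F) - 1) * (P⁻¹ : GLn n F) := by
    simp [mul_sub, sub_mul]
  have hnil : IsNilpotent (((P * u * P⁻¹ : GLn n F) : Matrix (Fin n) (Fin n) F) - 1) := by
    obtain ⟨k, hk⟩ := hunip
    exact ⟨k, by rw [hconj, Units.conj_pow, hk, mul_zero, zero_mul]⟩
  have hdiag := (IsDiag.sub (hP u hu) isDiag_one).eq_zero_of_isNilpotent hnil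
  rwa [sub_eq_zero, Units.val_eq_one, conj_eq_one_iff] at hdiag

noncomputable def conjDiagPoly (P : GLn n F) (i : Fin n) : MvPolynomial (Fin n × Fin n) F :=
  ∑ a, ∑ b, MvPolynomial.C ((P : Matrix (Fin n) (Fin n) F) i a *
    ((P⁻¹ : GLn n F) : Matrix (Fin n) (Fin n) F) b i) * MvPolynomial.X (a, b)

theorem matEval_conjDiagPoly (P g : GLn n F) (i : Fin n) :
    matEval (g : Matrix (Fin n) (Fin n) F) (conjDiagPoly P i) =
      ((P * g * P⁻¹ : GLn n F) : Matrix (Fin n) (Fin n) F) i i := by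
  simp only [conjDiagPoly, matEval, map_sum, map_mul, MvPolynomial.eval_C, MvPolynomial.eval_X,
    Units.val_mul, mul_apply, Finset.sum_mul]
  rw [Finset.sum_comm]
  exact Finset.sum_congr rfl fun b _ => Finset.sum_congr rfl fun a _ => by ring

theorem mem_zeroLocus_conjDiagPoly_sub {P g : GLn n F} {i j : Fin n} :
    g ∈ zeroLocus (conjDiagPoly P i - conjDiagPoly P j) ↔
      ((P * g * P⁻¹ : GLn n F) : Matrix (Fin n) (Fin n) F) i i =
        ((P * g * P⁻¹ : GLn n F) : Matrix (Fin n) (Fin n) F) j j := by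
  rw [zeroLocus, Set.mem_ofPred_eq, matEval_sub, matEval_conjDiagPoly, matEval_conjDiagPoly,
    sub_eq_zero]

theorem commute_of_commute_of_isDiag_conj (P : GLn n F) {t c x : GLn n F}
    (ht : ((P * t * P⁻¹ : GLn n F) : Matrix (Fin n) (Fin n) F).IsDiag)
    (hc : ((P * c * P⁻¹ : GLn n F) : Matrix (Fin n) (Fin n) F).IsDiag)
    (htc : ∀ i j, ((P * t * P⁻¹ : GLn n F) : Matrix (Fin n) (Fin n) F) i i =
        ((P * t * P⁻¹ : GLn n F) : Matrix (Fin n) (Fin n) F) j j →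
      ((P * c * P⁻¹ : GLn n F) : Matrix (Fin n) (Fin n) F) i i =
        ((P * c * P⁻¹ : GLn n F) : Matrix (Fin n) (Fin n) F) j j)
    (hx : Commute x t) : Commute x c := by
  rw [← Commute.conj_iff P, ← Commute.units_val_iff, ← ht.diagonal_diag] at hx
  rw [← Commute.conj_iff P, ← Commute.units_val_iff, ← hc.diagonal_diag]
  exact commute_diagonal_of_commute_diagonal hx htc

/-- `Z` is the union of the hypersurfaces `(P g P⁻¹) i i = (P g P⁻¹) j j` over the pairs
`(i, j)` on which these entries are not equal throughout `s`. -/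
theorem exists_isZClosed_centralizer_eq {s : Set (GLn n F)} (hs : ZConnected s) (P : GLn n F)
    (hP : ∀ g ∈ s, ((P * g * P⁻¹ : GLn n F) : Matrix (Fin n) (Fin n) F).IsDiag) :
    ∃ Z : Set (GLn n F), IsZClosed Z ∧ ¬ s ⊆ Z ∧
      ∀ t ∈ s \ Z, Subgroup.centralizer {t} = Subgroup.centralizer s := by
  classical
  let δ : Fin n × Fin n → MvPolynomial (Fin n × Fin n) F :=
    fun ij => conjDiagPoly P ij.1 - conjDiagPoly P ij.2
  let S := Finset.univ.filter fun ij => ¬ s ⊆ zeroLocus (δ ij)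
  refine ⟨zeroLocus (∏ ij ∈ S, δ ij), isZClosed_zeroLocus _,
    hs.not_subset_zeroLocus_prod S δ fun ij hij => (Finset.mem_filter.mp hij).2, ?_⟩
  rintro t ⟨hts, htZ⟩
  refine le_antisymm (fun x hx => Subgroup.mem_centralizer_iff.mpr fun c hc => ?_)
    (Subgroup.centralizer_le (Set.singleton_subset_iff.mpr hts))
  have hxt : Commute x t := (Subgroup.mem_centralizer_iff.mp hx t rfl).symm
  refine (commute_of_commute_of_isDiag_conj P (hP t hts) (hP c hc) (fun i j hij => ?_) hxt).eq.symm
  have hijS : (i, j) ∉ S := fun hijS => htZ <| by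
    rw [zeroLocus_prod]
    exact Set.mem_biUnion hijS (mem_zeroLocus_conjDiagPoly_sub.mpr hij)
  have hsij : s ⊆ zeroLocus (δ (i, j)) := by simpa [S] using hijS
  exact mem_zeroLocus_conjDiagPoly_sub.mp (hsij hc)

end GLn

theorem cartan_component_regular_elements_dense_general
    {n : ℕ} {F : Type*} [Field F]
    (G Go C Co TC : Subgroup (GLn n F))
    (hC : IsCartanSubgroup G C Co)
    (hTC : TC = Subgroup.centralizer (Co : Set (GLn n F)) ⊓ Go)
    (hTCmax : IsMaximalTorusIn Go TC) :
    (∀ u ∈ Go, IsUnipotentMat ((u : GLn n F) : Matrix (Fin n) (Fin n) F) →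
        (∀ c ∈ Co, u * c = c * u) → u = 1) ∧
    ∃ Z : Set (GLn n F), IsZClosed Z ∧
      ((Co : Set (GLn n F)) \ Z).Nonempty ∧
      (∀ t ∈ (Co : Set (GLn n F)) \ Z,
        Subgroup.centralizer ({t} : Set (GLn n F)) ⊓ Go = TC) ∧
      ∀ Z' : Set (GLn n F), IsZClosed Z' →
        (Co : Set (GLn n F)) ⊆ Z' ∪ Z → (Co : Set (GLn n F)) ⊆ Z' := by
  obtain ⟨-, ⟨P, hP⟩, -, ⟨hCoC, -, hconn, -⟩, -⟩ := hC
  obtain ⟨Z, hZ, hCoZ, hcent⟩ :=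
    exists_isZClosed_centralizer_eq hconn P fun g hg => hP g (hCoC hg)
  have hunip : ∀ u ∈ Go, IsUnipotentMat ((u : GLn n F) : Matrix (Fin n) (Fin n) F) →
      (∀ c ∈ Co, u * c = c * u) → u = 1 := fun u hu hu1 hcomm =>
    hTCmax.2.1.1.eq_one_of_isUnipotentMat
      (hTC ▸ ⟨Subgroup.mem_centralizer_iff.mpr fun c hc => (hcomm c hc).symm, hu⟩) hu1
  exact ⟨hunip, Z, hZ, Set.sdiff_nonempty.mpr hCoZ, fun t ht => by rw [hcent t ht, hTC],
    fun Z' hZ' hsub => hconn.subset_of_subset_union hZ' hZ hsub hCoZ⟩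

theorem cartan_component_regular_elements_dense
    {n : ℕ} {F : Type*} [Field F] [IsAlgClosed F]
    (G Go C Co TC : Subgroup (GLn n F))
    (hG : IsZClosed (G : Set (GLn n F)))
    (hGo : IsIdentityComponent G Go)
    (hred : IsReductiveGrp Go)
    (hC : IsCartanSubgroup G C Co)
    (hTC : TC = Subgroup.centralizer (Co : Set (GLn n F)) ⊓ Go)
    (hTCmax : IsMaximalTorusIn Go TC) :
    (∀ u ∈ Go, IsUnipotentMat ((u : GLn n F) : Matrix (Fin n) (Fin n) F) →
        (∀ c ∈ Co, u * c = c * u) → u = 1) ∧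
    ∃ Z : Set (GLn n F), IsZClosed Z ∧
      ((Co : Set (GLn n F)) \ Z).Nonempty ∧
      (∀ t ∈ (Co : Set (GLn n F)) \ Z,
        Subgroup.centralizer ({t} : Set (GLn n F)) ⊓ Go = TC) ∧
      ∀ Z' : Set (GLn n F), IsZClosed Z' →
        (Co : Set (GLn n F)) ⊆ Z' ∪ Z → (Co : Set (GLn n F)) ⊆ Z' :=
  cartan_component_regular_elements_dense_general G Go C Co TC hC hTC hTCmax
end

section
/- Let G be a linear algebraic group over an algebraically closed field with G° reductive, G_i a coset of G°, and C a Cartan subgroup associated to G_i decomposed as C ≅ C° × ⟨μ⟩ with μ ∈ C ∩ G_i of order n. If t ∈ C° is such that t^n is regular semisimple in G°, then tμ is a regular semisimple element of G_i, i.e., the identity component of Z_{G°}(tμ) is a torus. -/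
open Matrix

/-!
Since `t` and `μ` commute and `μ ^ n = 1`, we have `(t * μ) ^ n = t ^ n`, so everything centralizing
`t * μ` centralizes `t ^ n`. Hence `Z_{G°}(t * μ)` lies in the maximal torus `Z_{G°}(t ^ n)` and is
diagonalizable, and so is its identity component, which is closed and connected by definition.
-/

theorem Subgroup.centralizer_singleton_le_pow {G : Type*} [Group G] (g : G) (k : ℕ) :
    centralizer ({g} : Set G) ≤ centralizer ({g ^ k} : Set G) := by
  intro x hx
  rw [mem_centralizer_singleton_iff] at hx ⊢
  exact (Commute.pow_right hx k).eq

theorem Commute.mul_pow_orderOf {M : Type*} [Monoid M] {a b : M} (h : Commute a b) :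
    (a * b) ^ orderOf b = a ^ orderOf b := by
  rw [h.mul_pow, pow_orderOf_eq_one, mul_one]

theorem IsDiagonalizableSubgroup.mono_s16 {n : ℕ} {F : Type*} [Field F] {H K : Subgroup (GLn n F)}
    (hK : IsDiagonalizableSubgroup K) (hHK : H ≤ K) : IsDiagonalizableSubgroup H :=
  let ⟨P, hP⟩ := hK
  ⟨P, fun g hg => hP g (hHK hg)⟩

theorem IsIdentityComponent.isAlgTorus {n : ℕ} {F : Type*} [Field F] {H Z : Subgroup (GLn n F)}
    (hZ : IsIdentityComponent H Z) (hH : IsDiagonalizableSubgroup H) : IsAlgTorus Z :=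
  ⟨hH.mono_s16 hZ.1, hZ.2.1, hZ.2.2.1⟩

theorem regular_semisimple_in_coset_general
    {N : ℕ} {F : Type*} [Field F]
    (G Go C Co : Subgroup (GLn N F))
    (hC : IsCartanSubgroup G C Co)
    (μ : GLn N F) (hμC : μ ∈ C) (n : ℕ) (hμn : orderOf μ = n)
    (hcomm : ∀ x ∈ C, ∀ y ∈ C, x * y = y * x)
    (t : GLn N F) (ht : t ∈ Co)
    (htreg : IsMaximalTorusIn Go
      (Subgroup.centralizer ({t ^ n} : Set (GLn N F)) ⊓ Go)) :
    ∀ Z : Subgroup (GLn N F),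
      IsIdentityComponent (Subgroup.centralizer ({t * μ} : Set (GLn N F)) ⊓ Go) Z →
        IsAlgTorus Z := by
  intro Z hZ
  obtain ⟨-, -, -, ⟨hCoC, -⟩, -⟩ := hC
  have htμ : Commute t μ := hcomm t (hCoC ht) μ hμC
  have hpow : (t * μ) ^ n = t ^ n := hμn ▸ htμ.mul_pow_orderOf
  have hle : Subgroup.centralizer {t * μ} ⊓ Go ≤ Subgroup.centralizer {t ^ n} ⊓ Go :=
    inf_le_inf_right Go (hpow ▸ Subgroup.centralizer_singleton_le_pow (t * μ) n)
  exact hZ.isAlgTorus (htreg.2.1.1.mono_s16 hle)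

theorem regular_semisimple_in_coset
    {N : ℕ} {F : Type*} [Field F] [IsAlgClosed F]
    (G Go C Co : Subgroup (GLn N F))
    (hG : IsZClosed (G : Set (GLn N F)))
    (hGo : IsIdentityComponent G Go)
    (hred : IsReductiveGrp Go)
    (hC : IsCartanSubgroup G C Co)
    (μ : GLn N F) (hμC : μ ∈ C) (n : ℕ) (hn : 0 < n) (hμn : orderOf μ = n)
    (hcomm : ∀ x ∈ C, ∀ y ∈ C, x * y = y * x)
    (hdecomp : ∀ x ∈ C, ∃ t ∈ Co, ∃ k : ℕ, x = t * μ ^ k)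
    (hdisj : ∀ k : ℕ, μ ^ k ∈ Co → μ ^ k = 1)
    (hgen : ∀ x ∈ C, ∃ k : ℤ, μ ^ k * x⁻¹ ∈ Co)
    (t : GLn N F) (ht : t ∈ Co)
    (htss : IsSemisimpleElt (t ^ n))
    (htreg : IsMaximalTorusIn Go
      (Subgroup.centralizer ({t ^ n} : Set (GLn N F)) ⊓ Go)) :
    ∀ Z : Subgroup (GLn N F),
      IsIdentityComponent (Subgroup.centralizer ({t * μ} : Set (GLn N F)) ⊓ Go) Z →
        IsAlgTorus Z :=
  regular_semisimple_in_coset_general G Go C Co hC μ hμC n hμn hcomm t ht htreg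
end
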